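/- If x is an aperiodic infinite word and there exists k > 0 such that span_x(n) ≤ k for infinitely many n > 0, then x is quasi-Sturmian: there exist integers d and n_0 such that p_x(n) = n + d for all n ≥ n_0. -/

import Mathlib

open scoped Classical

/-- `u` occurs in `w` starting at (0-based) position `i`. -/
def occursAt {α : Type*} (w u : List α) (i : ℕ) : Prop := (w.drop i).take u.length = u

/-- `u` is a factor of the finite word `w`. -/
def IsFactorOf {α : Type*} (w u : List α) : Prop := ∃ i, occursAt w u i

/-- `Γ` is a string attractor of the finite word `w` (positions are 0-based). -/
def IsAttractor {α : Type*} (w : List α) (Γ : Finset ℕ) : Prop :=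
  (∀ k ∈ Γ, k < w.length) ∧
  ∀ u : List α, u ≠ [] → IsFactorOf w u →
    ∃ i, occursAt w u i ∧ ∃ k ∈ Γ, i ≤ k ∧ k < i + u.length

/-- `γ*(w)`: minimum size of a string attractor of `w`. -/
noncomputable def gammaStar {α : Type*} (w : List α) : ℕ :=
  sInf {n | ∃ Γ : Finset ℕ, IsAttractor w Γ ∧ Γ.card = n}

/-- `span(w)`: minimum of (rightmost − leftmost position) over string attractors of `w`. -/
noncomputable def spanW {α : Type*} (w : List α) : ℕ :=
  sInf {d | ∃ Γ : Finset ℕ, IsAttractor w Γ ∧ sSup (Γ : Set ℕ) - sInf (Γ : Set ℕ) = d}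

/-- `lm(w)`: minimum rightmost position over string attractors of `w`. -/
noncomputable def lmW {α : Type*} (w : List α) : ℕ :=
  sInf {m | ∃ Γ : Finset ℕ, IsAttractor w Γ ∧ sSup (Γ : Set ℕ) = m}

/-- prefix of length `n` of the infinite word `x`. -/
def pref {α : Type*} (x : ℕ → α) (n : ℕ) : List α := (List.range n).map x

/-- the factor of length `m` of `x` starting at position `i`. -/
def factorAt {α : Type*} (x : ℕ → α) (i m : ℕ) : List α := (List.range m).map (fun t => x (i + t))

/-- `u` is a factor of the infinite word `x`. -/
def IsFactorInf {α : Type*} (x : ℕ → α) (u : List α) : Prop := ∃ i, u = factorAt x i u.length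

/-- factor complexity `p_x(n)`. -/
noncomputable def complexity {α : Type*} (x : ℕ → α) (n : ℕ) : ℕ :=
  {u : List α | u.length = n ∧ IsFactorInf x u}.ncard

/-- appearance function `A_x(n)`: least `m` such that the prefix of length `m`
contains all factors of `x` of length `n`. -/
noncomputable def appearance {α : Type*} (x : ℕ → α) (n : ℕ) : ℕ :=
  sInf {m | ∀ u : List α, u.length = n → IsFactorInf x u → IsFactorOf (pref x m) u}

/-- `x` is ultimately periodic. -/
def UltPeriodic {α : Type*} (x : ℕ → α) : Prop :=
  ∃ p N : ℕ, 0 < p ∧ ∀ i, N ≤ i → x (i + p) = x i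

/-- `x` is recurrent: every factor occurs infinitely often. -/
def Recurrent {α : Type*} (x : ℕ → α) : Prop :=
  ∀ u : List α, IsFactorInf x u → ∀ N : ℕ, ∃ i, N ≤ i ∧ u = factorAt x i u.length

/-- `u ^ k`: the `k`-th power of a finite word. -/
def listPow {α : Type*} (u : List α) : ℕ → List α
  | 0 => []
  | k + 1 => u ++ listPow u k

/-- `x` is ω-power free. -/
def OmegaPowerFree {α : Type*} (x : ℕ → α) : Prop :=
  ∀ u : List α, u ≠ [] → IsFactorInf x u → ∃ k : ℕ, ¬ IsFactorInf x (listPow u k)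

/-!
An optimal string attractor of `w` with extreme positions `a ≤ b` forces every factor of length `m`
to occur at some position in `[a + 1 - m, b]`, so `w` has at most `m + span(w)` factors of length
`m`. Every factor of `x` of length `m` occurs in all long enough prefixes, hence `p_x(m) ≤ m + k`.
For aperiodic `x` the complexity is strictly increasing, since otherwise each factor of some length
`n` has a unique right extension and two equal factors of length `n` propagate into a period.
So `p_x(n) - n` is nondecreasing and bounded by `k`, hence eventually constant.
-/

open Filter

section Words

variable {α : Type*}

@[simp] lemma pref_length (x : ℕ → α) (n : ℕ) : (pref x n).length = n := by simp [pref]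

@[simp] lemma factorAt_length (x : ℕ → α) (i m : ℕ) : (factorAt x i m).length = m := by
  simp [factorAt]

lemma isFactorInf_factorAt (x : ℕ → α) (i m : ℕ) : IsFactorInf x (factorAt x i m) :=
  ⟨i, by rw [factorAt_length]⟩

lemma take_drop_pref (x : ℕ → α) {i m n : ℕ} (h : i + m ≤ n) :
    ((pref x n).drop i).take m = factorAt x i m := by
  apply List.ext_getElem
  · simp; omega
  · intro t _ _
    simp [pref, factorAt]

lemma occursAt_pref_factorAt (x : ℕ → α) {i m n : ℕ} (h : i + m ≤ n) :
    occursAt (pref x n) (factorAt x i m) i := by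
  rw [occursAt, factorAt_length]
  exact take_drop_pref x h

lemma factorAt_eq_factorAt_iff {x : ℕ → α} {i j m : ℕ} :
    factorAt x i m = factorAt x j m ↔ ∀ s < m, x (i + s) = x (j + s) := by
  refine ⟨fun h s hs => ?_, fun h => List.ext_getElem (by simp) fun s hs _ => ?_⟩
  · simpa [factorAt, hs] using congrArg (·[s]?) h
  · simpa [factorAt] using h s (by simpa using hs)

lemma take_factorAt_succ (x : ℕ → α) (i m : ℕ) :
    (factorAt x i (m + 1)).take m = factorAt x i m := by
  apply List.ext_getElem
  · simp
  · intro t _ _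
    simp [factorAt]

end Words

section Attractor

variable {α : Type*}

lemma isAttractor_range (w : List α) : IsAttractor w (Finset.range w.length) := by
  refine ⟨fun k hk => Finset.mem_range.mp hk, ?_⟩
  rintro u hu ⟨i, hi⟩
  refine ⟨i, hi, i, Finset.mem_range.mpr ?_, le_rfl, by simpa [Nat.pos_iff_ne_zero] using hu⟩
  by_contra! hle
  rw [occursAt, List.drop_eq_nil_of_le hle, List.take_nil] at hi
  exact hu hi.symm

lemma exists_isAttractor_spanW (w : List α) :
    ∃ Γ : Finset ℕ, IsAttractor w Γ ∧ sSup (Γ : Set ℕ) - sInf (Γ : Set ℕ) = spanW w :=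
  Nat.sInf_mem (s := {d | ∃ Γ : Finset ℕ, IsAttractor w Γ ∧
    sSup (Γ : Set ℕ) - sInf (Γ : Set ℕ) = d}) ⟨_, Finset.range w.length, isAttractor_range w, rfl⟩

lemma ncard_factors_le_add_spanW (w : List α) {m : ℕ} (hm : 0 < m) :
    {u : List α | u.length = m ∧ IsFactorOf w u}.ncard ≤ m + spanW w := by
  set S := {u : List α | u.length = m ∧ IsFactorOf w u}
  obtain ⟨Γ, hΓ, hspan⟩ := exists_isAttractor_spanW w
  set a := sInf (Γ : Set ℕ)
  set b := sSup (Γ : Set ℕ)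
  have hcover : ∀ u ∈ S, ∃ i, (w.drop i).take m = u ∧ ∃ c ∈ Γ, i ≤ c ∧ c < i + m := by
    rintro u ⟨hlen, hfac⟩
    obtain ⟨i, hi, c, hc, hic, hci⟩ := hΓ.2 u (by rintro rfl; simp at hlen; omega) hfac
    exact ⟨i, hlen ▸ hi, c, hc, hic, hlen ▸ hci⟩
  have hbounds : ∀ c ∈ Γ, a ≤ c ∧ c ≤ b := fun c hc =>
    ⟨Nat.sInf_le (Finset.mem_coe.mpr hc), le_csSup Γ.finite_toSet.bddAbove hc⟩
  rcases S.eq_empty_or_nonempty with hS | ⟨u₀, hu₀⟩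
  · simp [hS]
  have hab : a ≤ b := by
    obtain ⟨-, -, c, hc, -⟩ := hcover u₀ hu₀
    exact (hbounds c hc).1.trans (hbounds c hc).2
  have hsub : S ⊆ (fun i => (w.drop i).take m) '' Set.Icc (a + 1 - m) b := by
    intro u hu
    obtain ⟨i, rfl, c, hc, hic, hci⟩ := hcover u hu
    have := hbounds c hc
    exact ⟨i, ⟨by omega, by omega⟩, rfl⟩
  calc S.ncard ≤ ((fun i => (w.drop i).take m) '' Set.Icc (a + 1 - m) b).ncard :=
        Set.ncard_le_ncard hsub ((Set.finite_Icc _ _).image _)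
    _ ≤ (Set.Icc (a + 1 - m) b).ncard := Set.ncard_image_le (Set.finite_Icc _ _)
    _ = b + 1 - (a + 1 - m) := Set.ncard_Icc_nat _ _
    _ ≤ m + spanW w := by omega

end Attractor

section Complexity

variable {α : Type*}

def factorsOfLength (x : ℕ → α) (n : ℕ) : Set (List α) := {u | u.length = n ∧ IsFactorInf x u}

lemma complexity_eq_ncard (x : ℕ → α) (n : ℕ) :
    complexity x n = (factorsOfLength x n).ncard :=
  rfl

lemma mem_factorsOfLength {x : ℕ → α} {n : ℕ} {u : List α} :
    u ∈ factorsOfLength x n ↔ ∃ i, factorAt x i n = u := by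
  constructor
  · rintro ⟨rfl, i, hi⟩
    exact ⟨i, hi.symm⟩
  · rintro ⟨i, rfl⟩
    exact ⟨factorAt_length x i n, isFactorInf_factorAt x i n⟩

lemma factorAt_mem_factorsOfLength (x : ℕ → α) (i n : ℕ) : factorAt x i n ∈ factorsOfLength x n :=
  mem_factorsOfLength.mpr ⟨i, rfl⟩

variable [Finite α]

lemma finite_factorsOfLength (x : ℕ → α) (n : ℕ) : (factorsOfLength x n).Finite :=
  (List.finite_length_eq α n).subset fun _ hu => hu.1

lemma eventually_isFactorOf_pref (x : ℕ → α) (m : ℕ) :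
    ∀ᶠ n in atTop, ∀ u ∈ factorsOfLength x m, IsFactorOf (pref x n) u := by
  choose! i hi using fun u (hu : u ∈ factorsOfLength x m) => mem_factorsOfLength.mp hu
  obtain ⟨N, hN⟩ := ((finite_factorsOfLength x m).image i).bddAbove
  filter_upwards [eventually_ge_atTop (N + m)] with n hn u hu
  have hiN : i u ≤ N := hN (Set.mem_image_of_mem i hu)
  rw [← hi u hu]
  exact ⟨i u, occursAt_pref_factorAt x (by omega)⟩

lemma eventually_complexity_le_add_spanW_pref (x : ℕ → α) {m : ℕ} (hm : 0 < m) :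
    ∀ᶠ n in atTop, complexity x m ≤ m + spanW (pref x n) := by
  filter_upwards [eventually_isFactorOf_pref x m] with n hn
  refine le_trans (Set.ncard_le_ncard ?_ ?_) (ncard_factors_le_add_spanW (pref x n) hm)
  · exact fun u hu => ⟨hu.1, hn u hu⟩
  · exact (List.finite_length_eq α m).subset fun _ hu => hu.1

lemma eq_of_factorAt_eq_of_complexity_succ_le {x : ℕ → α} {n : ℕ}
    (hle : complexity x (n + 1) ≤ complexity x n) {i j : ℕ}
    (hij : factorAt x i n = factorAt x j n) : x (i + n) = x (j + n) := by
  have himage : (·.take n) '' factorsOfLength x (n + 1) = factorsOfLength x n := by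
    ext v
    simp only [Set.mem_image, mem_factorsOfLength]
    constructor
    · rintro ⟨_, ⟨l, rfl⟩, rfl⟩
      exact ⟨l, (take_factorAt_succ x l n).symm⟩
    · rintro ⟨l, rfl⟩
      exact ⟨_, ⟨l, rfl⟩, take_factorAt_succ x l n⟩
  have hinj : Set.InjOn (·.take n) (factorsOfLength x (n + 1)) := by
    refine Set.injOn_of_ncard_image_eq (le_antisymm ?_ ?_) (finite_factorsOfLength x (n + 1))
    · exact Set.ncard_image_le (finite_factorsOfLength x (n + 1))
    · rwa [himage, ← complexity_eq_ncard, ← complexity_eq_ncard]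
  have hext : factorAt x i (n + 1) = factorAt x j (n + 1) :=
    hinj (factorAt_mem_factorsOfLength x i _) (factorAt_mem_factorsOfLength x j _)
      (by simpa only [take_factorAt_succ] using hij)
  exact factorAt_eq_factorAt_iff.mp hext n (Nat.lt_add_one n)

lemma ultPeriodic_of_forall_factorAt_eq {x : ℕ → α} {n : ℕ}
    (hdet : ∀ i j, factorAt x i n = factorAt x j n → x (i + n) = x (j + n)) : UltPeriodic x := by
  obtain ⟨i, j, hij, heq⟩ := (finite_factorsOfLength x n).exists_lt_map_eq_of_forall_mem
    (f := fun i => factorAt x i n) (factorAt_mem_factorsOfLength x · n)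
  have hshift : ∀ t, factorAt x (i + t) n = factorAt x (j + t) n := by
    intro t
    induction t with
    | zero => exact heq
    | succ t ih =>
      refine factorAt_eq_factorAt_iff.mpr fun s hs => ?_
      rcases Nat.lt_or_ge (s + 1) n with hs' | hs'
      · simpa only [Nat.add_assoc, Nat.add_comm 1 s] using factorAt_eq_factorAt_iff.mp ih _ hs'
      · obtain rfl : s + 1 = n := by omega
        simpa only [Nat.add_assoc, Nat.add_comm 1 s] using hdet _ _ ih
  refine ⟨j - i, i + n, by omega, fun m hm => ?_⟩
  have := hdet _ _ (hshift (m - (i + n)))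
  rw [show i + (m - (i + n)) + n = m by omega, show j + (m - (i + n)) + n = m + (j - i) by omega]
    at this
  exact this.symm

lemma strictMono_complexity {x : ℕ → α} (hap : ¬ UltPeriodic x) : StrictMono (complexity x) :=
  strictMono_nat_of_lt_succ fun _ => lt_of_not_ge fun hle =>
    hap (ultPeriodic_of_forall_factorAt_eq fun _ _ => eq_of_factorAt_eq_of_complexity_succ_le hle)

end Complexity

lemma Nat.exists_eventually_eq_add_of_strictMono {f : ℕ → ℕ} (hf : StrictMono f) {k : ℕ}
    (hb : ∀ᶠ n in atTop, f n ≤ n + k) : ∃ d, ∀ᶠ n in atTop, f n = n + d := by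
  have hid : ∀ n, n ≤ f n := hf.id_le
  have hmono : Monotone fun n => f n - n := monotone_nat_of_le_succ fun n => by
    show f n - n ≤ f (n + 1) - (n + 1)
    have := hf (Nat.lt_add_one n)
    have := hid n
    omega
  obtain ⟨N, hN⟩ := eventually_atTop.mp hb
  have hbdd : BddAbove (Set.range fun n => f n - n) := by
    refine ⟨k, Set.forall_mem_range.mpr fun n => (hmono (le_max_left n N)).trans ?_⟩
    have := hN _ (le_max_right n N)
    show f (max n N) - max n N ≤ k
    omega
  have hlim := tendsto_atTop_ciSup hmono hbdd
  rw [nhds_discrete, tendsto_pure] at hlim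
  refine ⟨⨆ n, f n - n, hlim.mono fun n (hn : f n - n = _) => ?_⟩
  have := hid n
  omega

theorem stmt15_general {α : Type*} [Fintype α] (x : ℕ → α) (hap : ¬ UltPeriodic x)
    (k : ℕ) (h : ∀ N : ℕ, ∃ n, N < n ∧ spanW (pref x n) ≤ k) :
    ∃ d n₀ : ℕ, ∀ n, n₀ ≤ n → complexity x n = n + d := by
  have hbound : ∀ᶠ m in atTop, complexity x m ≤ m + k := by
    filter_upwards [eventually_gt_atTop 0] with m hm
    obtain ⟨N, hN⟩ := eventually_atTop.mp (eventually_complexity_le_add_spanW_pref x hm)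
    obtain ⟨n, hNn, hspan⟩ := h N
    exact (hN n hNn.le).trans (by omega)
  obtain ⟨d, hd⟩ :=
    Nat.exists_eventually_eq_add_of_strictMono (strictMono_complexity hap) hbound
  exact ⟨d, eventually_atTop.mp hd⟩

/-- aperiodic + span bounded infinitely often implies quasi-Sturmian. -/
theorem stmt15 {α : Type*} [Fintype α] (x : ℕ → α) (hap : ¬ UltPeriodic x)
    (k : ℕ) (hk : 0 < k) (h : ∀ N : ℕ, ∃ n, N < n ∧ spanW (pref x n) ≤ k) :
    ∃ d n₀ : ℕ, ∀ n, n₀ ≤ n → complexity x n = n + d :=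
  stmt15_general x hap k h
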